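/- arXiv:1908.10015 — 4 statements merged into one kernel-verified Lean document; each statement's English description precedes it below -/
import Mathlib

section
/- Let p ≥ 2, λ > 0, C > 0, let P(t,s,x,·) be a two-parameter family of Markov transition kernels on ℝ^d, let (Ω,F,P) be a probability space, and let φ(t) ∈ L^p(Ω;ℝ^d) for each t ∈ ℝ with laws ρ_t := law(φ(t)). Assume that for every t ≥ s and every x ∈ ℝ^d there exists a random variable X_t^{s,x} on Ω with law P(t,s,x,·) such that E|X_t^{s,x} − φ(t)|^p ≤ C(1+|x|^p) e^{−pλ(t−s)}. Then every entrance measure μ of P with sup_{t∈ℝ} ∫_{ℝ^d} |x|^p μ_t(dx) < ∞ satisfies μ_t = ρ_t for every t ∈ ℝ. -/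
/-!
For `s ≤ t` the entrance property writes `μ t` as the mixture `∫ K(t,s,x,·) μ_s(dx)`. Each
`K(t,s,x,·)` is the law of a random variable `X` with `E‖X - φ t‖^p ≤ C e^{-pλ(t-s)} (1 + ‖x‖^p)`,
so by Markov's inequality `K(t,s,x,B) ≤ ρ_t(B^δ) + C e^{-pλ(t-s)} (1 + ‖x‖^p) / δ^p` for every
`δ`-thickening `B^δ`. Integrating against `μ_s` and using the uniform moment bound `M`, the
Lévy–Prokhorov distance from `μ_t` to `ρ_t` is at most `max(δ, C e^{-pλ(t-s)} (1 + M) / δ^p)`.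
Letting `s → -∞` and then `δ → 0`, it vanishes, and this distance separates finite Borel measures.
-/

open MeasureTheory Metric Filter Topology
open scoped ENNReal

lemma tendsto_ofReal_mul_exp_neg_mul_sub_atBot {a : ℝ} (ha : 0 < a) (C t : ℝ) :
    Tendsto (fun s => ENNReal.ofReal (C * Real.exp (-a * (t - s)))) atBot (𝓝 0) := by
  have h_lin : Tendsto (fun s => -a * (t - s)) atBot atBot := by
    refine (tendsto_atBot_add_const_right _ (-a * t) (tendsto_id.const_mul_atBot ha)).congr ?_
    intro s; simp only [id]; ring
  simpa using ENNReal.tendsto_ofReal ((Real.tendsto_exp_atBot.comp h_lin).const_mul C)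

lemma ENNReal.eq_zero_of_forall_le_max_of_tendsto {ι : Type*} {l : Filter ι} [l.NeBot]
    {a : ℝ≥0∞} {e : ι → ℝ≥0∞} (he : Tendsto e l (𝓝 0))
    (h : ∀ δ : ℝ, 0 < δ → ∃ k ≠ ⊤, ∀ᶠ i in l, a ≤ max (ENNReal.ofReal δ) (e i * k)) :
    a = 0 := by
  refine nonpos_iff_eq_zero.1 <| ENNReal.le_of_forall_pos_le_add fun ε hε _ => ?_
  obtain ⟨k, hk, h_ev⟩ := h ε hε
  have h_small : ∀ᶠ i in l, e i * k < ENNReal.ofReal ε := by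
    have := ENNReal.Tendsto.mul_const he (Or.inr hk)
    rw [zero_mul] at this
    exact this.eventually (gt_mem_nhds (by simpa using hε))
  obtain ⟨i, hi, hi'⟩ := (h_ev.and h_small).exists
  simpa using hi.trans (max_le le_rfl hi'.le)

namespace MeasureTheory

section LevyProkhorov

variable {E : Type*} [PseudoMetricSpace E] [MeasurableSpace E]

lemma levyProkhorovEDist_le_max_of_forall_le_thickening [OpensMeasurableSpace E]
    (μ ν : Measure E) [IsProbabilityMeasure μ] [IsProbabilityMeasure ν] {δ : ℝ} {η : ℝ≥0∞}
    (h : ∀ B, MeasurableSet B → μ B ≤ ν (thickening δ B) + η) :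
    levyProkhorovEDist μ ν ≤ max (ENNReal.ofReal δ) η := by
  refine levyProkhorovEDist_le_of_forall_le μ ν _ fun ε B hε hε_top hB => ?_
  have hδε : δ ≤ ε.toReal :=
    ENNReal.ofReal_le_iff_le_toReal hε_top.ne |>.1 (le_max_left _ _ |>.trans hε.le)
  exact (h B hB).trans <| add_le_add (measure_mono (thickening_mono hδε B))
    (le_max_right _ _ |>.trans hε.le)

lemma measure_eq_of_levyProkhorovEDist_eq_zero [BorelSpace E] {μ ν : Measure E}
    [IsFiniteMeasure μ] [IsFiniteMeasure ν] (h : levyProkhorovEDist μ ν = 0) : μ = ν := by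
  have h_closed : ∀ B, IsClosed B → μ B = ν B := fun B hB =>
    measure_eq_measure_of_levyProkhorovEDist_eq_zero_of_isClosed h hB
      ⟨1, one_pos, measure_ne_top _ _⟩ ⟨1, one_pos, measure_ne_top _ _⟩
  refine ext_of_generate_finite _ ?_ isPiSystem_isClosed (fun B hB => h_closed B hB)
    (h_closed _ isClosed_univ)
  rw [BorelSpace.measurable_eq (α := E), borel_eq_generateFrom_isClosed]

end LevyProkhorov

lemma map_apply_le_map_thickening_add {Ω E : Type*} [MeasurableSpace Ω] [PseudoMetricSpace E]
    [MeasurableSpace E] [OpensMeasurableSpace E] (P : Measure Ω) {X Y : Ω → E}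
    (hX : Measurable X) (hY : AEMeasurable Y P) {B : Set E} (hB : MeasurableSet B) (δ : ℝ) :
    P.map X B ≤ P.map Y (thickening δ B) + P {ω | δ ≤ dist (X ω) (Y ω)} := by
  rw [Measure.map_apply hX hB]
  calc P (X ⁻¹' B) ≤ P (Y ⁻¹' thickening δ B ∪ {ω | δ ≤ dist (X ω) (Y ω)}) := by
        refine measure_mono fun ω hω => ?_
        by_cases hω' : δ ≤ dist (X ω) (Y ω)
        · exact Or.inr hω'
        · exact Or.inl (mem_thickening_iff.2 ⟨X ω, hω, by rw [dist_comm]; exact not_le.1 hω'⟩)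
    _ ≤ P (Y ⁻¹' thickening δ B) + P {ω | δ ≤ dist (X ω) (Y ω)} := measure_union_le _ _
    _ ≤ P.map Y (thickening δ B) + P {ω | δ ≤ dist (X ω) (Y ω)} := by
        gcongr; exact Measure.le_map_apply hY _

lemma meas_le_norm_le_ofReal_integral_rpow_div {Ω F : Type*} [MeasurableSpace Ω]
    [NormedAddCommGroup F] (P : Measure Ω) [IsFiniteMeasure P] {Z : Ω → F} {p δ : ℝ}
    (hp : 0 < p) (hδ : 0 < δ) (hZ : Integrable (fun ω => ‖Z ω‖ ^ p) P) :
    P {ω | δ ≤ ‖Z ω‖} ≤ ENNReal.ofReal ((∫ ω, ‖Z ω‖ ^ p ∂P) / δ ^ p) := by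
  have hδp : 0 < δ ^ p := Real.rpow_pos_of_pos hδ p
  have h_sub : {ω | δ ≤ ‖Z ω‖} ⊆ {ω | δ ^ p ≤ ‖Z ω‖ ^ p} := fun ω hω =>
    Real.rpow_le_rpow hδ.le hω hp.le
  have h_markov := mul_meas_ge_le_integral_of_nonneg
    (ae_of_all _ fun ω => Real.rpow_nonneg (norm_nonneg (Z ω)) p) hZ (δ ^ p)
  calc P {ω | δ ≤ ‖Z ω‖} ≤ P {ω | δ ^ p ≤ ‖Z ω‖ ^ p} := measure_mono h_sub
    _ = ENNReal.ofReal (P.real {ω | δ ^ p ≤ ‖Z ω‖ ^ p}) := (ofReal_measureReal).symm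
    _ ≤ _ := ENNReal.ofReal_le_ofReal <| (le_div_iff₀' hδp).2 h_markov

lemma memLp_of_lintegral_map_rpow_ne_top {Ω E : Type*} [MeasurableSpace Ω]
    [NormedAddCommGroup E] [MeasurableSpace E] [OpensMeasurableSpace E] [SecondCountableTopology E]
    {P : Measure Ω} {X : Ω → E} (hX : Measurable X) {p : ℝ} (hp : 0 < p)
    (h : ∫⁻ y, ENNReal.ofReal (‖y‖ ^ p) ∂(P.map X) ≠ ⊤) : MemLp X (ENNReal.ofReal p) P := by
  have hp' : ENNReal.ofReal p ≠ 0 := ENNReal.ofReal_ne_zero_iff.2 hp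
  have h_id : MemLp id (ENNReal.ofReal p) (P.map X) := by
    rw [← integrable_norm_rpow_iff aestronglyMeasurable_id hp' ENNReal.ofReal_ne_top,
      ENNReal.toReal_ofReal hp.le]
    refine ⟨by fun_prop (disch := exact hp.le), ?_⟩
    rw [hasFiniteIntegral_iff_ofReal (ae_of_all _ fun y => by positivity)]
    exact h.lt_top
  exact h_id.comp_of_map hX.aemeasurable

lemma lintegral_le_const_add_lintegral_of_ae_le {α : Type*} [MeasurableSpace α] {μ : Measure α}
    [IsProbabilityMeasure μ] {f g : α → ℝ≥0∞} {a : ℝ≥0∞} (h : ∀ᵐ x ∂μ, f x ≤ a + g x) :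
    ∫⁻ x, f x ∂μ ≤ a + ∫⁻ x, g x ∂μ :=
  calc ∫⁻ x, f x ∂μ ≤ ∫⁻ x, (a + g x) ∂μ := lintegral_mono_ae h
    _ = a + ∫⁻ x, g x ∂μ := by rw [lintegral_add_left measurable_const, lintegral_const,
        measure_univ, mul_one]

lemma Measure.bind_eq_of_forall_lintegral_apply {α β : Type*} [MeasurableSpace α]
    [MeasurableSpace β] {μ : Measure α} {ν : Measure β} {κ : α → Measure β}
    (hκ : ∀ B, MeasurableSet B → Measurable fun x => κ x B)
    (h : ∀ B, MeasurableSet B → ∫⁻ x, κ x B ∂μ = ν B) : μ.bind κ = ν :=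
  Measure.ext fun B hB => by
    rw [Measure.bind_apply hB (Measure.measurable_of_measurable_coe κ hκ).aemeasurable, h B hB]

lemma Measure.ae_lintegral_ne_top_of_bind {α β : Type*} [MeasurableSpace α] [MeasurableSpace β]
    {μ : Measure α} {κ : α → Measure β} (hκ : Measurable κ) {f : β → ℝ≥0∞} (hf : Measurable f)
    (h : ∫⁻ y, f y ∂(μ.bind κ) ≠ ⊤) : ∀ᵐ x ∂μ, ∫⁻ y, f y ∂(κ x) ≠ ⊤ := by
  rw [Measure.lintegral_bind hκ.aemeasurable hf.aemeasurable] at h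
  filter_upwards [ae_lt_top ((Measure.measurable_lintegral hf).comp hκ) h] with x hx
  exact hx.ne

section Coupling

variable {Ω E : Type*} [MeasurableSpace Ω] [NormedAddCommGroup E] [MeasurableSpace E]

lemma map_apply_le_map_thickening_add_ofReal_div [OpensMeasurableSpace E] (P : Measure Ω)
    [IsFiniteMeasure P] {X Y : Ω → E} (hX : Measurable X) (hY : AEMeasurable Y P) {p c δ : ℝ}
    (hp : 0 < p) (hδ : 0 < δ) (hXY : Integrable (fun ω => ‖X ω - Y ω‖ ^ p) P)
    (hc : ∫ ω, ‖X ω - Y ω‖ ^ p ∂P ≤ c) {B : Set E} (hB : MeasurableSet B) :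
    P.map X B ≤ P.map Y (thickening δ B) + ENNReal.ofReal c / ENNReal.ofReal (δ ^ p) := by
  have hδp : 0 < δ ^ p := Real.rpow_pos_of_pos hδ p
  refine (map_apply_le_map_thickening_add P hX hY hB δ).trans ?_
  gcongr
  simp_rw [dist_eq_norm]
  refine (meas_le_norm_le_ofReal_integral_rpow_div P hp hδ hXY).trans ?_
  rw [← ENNReal.ofReal_div_of_pos hδp]
  exact ENNReal.ofReal_le_ofReal (div_le_div_of_nonneg_right hc hδp.le)

variable [BorelSpace E] [SecondCountableTopology E]

theorem levyProkhorovEDist_le_of_coupling (P : Measure Ω) [IsProbabilityMeasure P]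
    {μ ν : Measure E} [IsProbabilityMeasure μ] [IsProbabilityMeasure ν] {κ : E → Measure E}
    (hκ : Measurable κ) (hν : μ.bind κ = ν) {Y : Ω → E} {p c δ : ℝ} (hp : 0 < p) (hδ : 0 < δ)
    (hY : MemLp Y (ENNReal.ofReal p) P)
    (h_coupling : ∀ x, ∃ X : Ω → E, Measurable X ∧ P.map X = κ x ∧
      ∫ ω, ‖X ω - Y ω‖ ^ p ∂P ≤ c * (1 + ‖x‖ ^ p))
    (h_moment : ∫⁻ y, ENNReal.ofReal (‖y‖ ^ p) ∂ν ≠ ⊤) :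
    levyProkhorovEDist ν (P.map Y) ≤ max (ENNReal.ofReal δ)
      (ENNReal.ofReal c * ((1 + ∫⁻ x, ENNReal.ofReal (‖x‖ ^ p) ∂μ) / ENNReal.ofReal (δ ^ p))) := by
  have hY_meas := hY.aestronglyMeasurable.aemeasurable
  have : IsProbabilityMeasure (P.map Y) := Measure.isProbabilityMeasure_map hY_meas
  have h_norm : Measurable fun y : E => ENNReal.ofReal (‖y‖ ^ p) := by
    fun_prop (disch := exact hp.le)
  have hp' : ENNReal.ofReal p ≠ 0 := ENNReal.ofReal_ne_zero_iff.2 hp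
  refine levyProkhorovEDist_le_max_of_forall_le_thickening _ _ fun B hB => ?_
  have h_pointwise : ∀ᵐ x ∂μ, κ x B ≤ P.map Y (thickening δ B) +
      ENNReal.ofReal c * ((1 + ENNReal.ofReal (‖x‖ ^ p)) / ENNReal.ofReal (δ ^ p)) := by
    -- a finite `p`-th moment of `κ x` makes `‖X - Y‖ ^ p` integrable, so that the Bochner
    -- bound in `h_coupling` is not the junk value of a non-integrable function
    filter_upwards [Measure.ae_lintegral_ne_top_of_bind hκ h_norm (hν ▸ h_moment)] with x hx
    obtain ⟨X, hX, hX_law, hXY⟩ := h_coupling x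
    rw [← hX_law] at hx ⊢
    have hXY_int : Integrable (fun ω => ‖X ω - Y ω‖ ^ p) P := by
      simpa [ENNReal.toReal_ofReal hp.le] using
        ((memLp_of_lintegral_map_rpow_ne_top hX hp hx).sub hY).integrable_norm_rpow hp'
          ENNReal.ofReal_ne_top
    refine (map_apply_le_map_thickening_add_ofReal_div P hX hY_meas hp hδ hXY_int hXY hB
      ).trans_eq ?_
    rw [ENNReal.ofReal_mul' (by positivity), ENNReal.ofReal_add zero_le_one (by positivity),
      ENNReal.ofReal_one, mul_div_assoc]
  calc ν B = ∫⁻ x, κ x B ∂μ := by rw [← hν, Measure.bind_apply hB hκ.aemeasurable]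
    _ ≤ _ := lintegral_le_const_add_lintegral_of_ae_le h_pointwise
    _ = _ := by
      simp_rw [div_eq_mul_inv]
      have hδp : ENNReal.ofReal (δ ^ p) ≠ 0 := by simpa using Real.rpow_pos_of_pos hδ p
      rw [lintegral_const_mul' _ _ ENNReal.ofReal_ne_top,
        lintegral_mul_const' _ _ (ENNReal.inv_ne_top.2 hδp),
        lintegral_add_left measurable_const, lintegral_const, measure_univ, mul_one]

end Coupling

end MeasureTheory

theorem entrance_measure_unique_general {d : ℕ}
    {Ω : Type*} [MeasurableSpace Ω] (P : Measure Ω) [IsProbabilityMeasure P]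
    (p : ℝ) (hp : 2 ≤ p) (lam : ℝ) (hlam : 0 < lam) (C : ℝ)
    -- the two-parameter family of Markov transition kernels
    (K : ℝ → ℝ → EuclideanSpace ℝ (Fin d) → Measure (EuclideanSpace ℝ (Fin d)))
    (hK_meas : ∀ t s : ℝ, s ≤ t → ∀ Γ : Set (EuclideanSpace ℝ (Fin d)),
      MeasurableSet Γ → Measurable fun x => K t s x Γ)
    -- the random path φ with laws ρ_t = law(φ(t))
    (φ : ℝ → Ω → EuclideanSpace ℝ (Fin d))
    (hφ_Lp : ∀ t, MemLp (φ t) (ENNReal.ofReal p) P)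
    -- realisation of the kernels, exponentially close to φ in L^p
    (happrox : ∀ t s : ℝ, s ≤ t → ∀ x : EuclideanSpace ℝ (Fin d),
      ∃ X : Ω → EuclideanSpace ℝ (Fin d), Measurable X ∧ P.map X = K t s x ∧
        ∫ ω, ‖X ω - φ t ω‖ ^ p ∂P ≤ C * (1 + ‖x‖ ^ p) * Real.exp (-(p * lam) * (t - s))) :
    -- every entrance measure with uniformly bounded p-th moments equals ρ
    ∀ μ : ℝ → Measure (EuclideanSpace ℝ (Fin d)),
      (∀ t, IsProbabilityMeasure (μ t)) →
      (∀ t s : ℝ, s ≤ t → ∀ Γ : Set (EuclideanSpace ℝ (Fin d)), MeasurableSet Γ →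
        ∫⁻ x, K t s x Γ ∂(μ s) = μ t Γ) →
      (⨆ t : ℝ, ∫⁻ x, ENNReal.ofReal (‖x‖ ^ p) ∂(μ t)) < ⊤ →
      ∀ t : ℝ, μ t = P.map (φ t) := by
  intro μ hμ h_entrance h_moment t
  set M := ⨆ u, ∫⁻ x, ENNReal.ofReal (‖x‖ ^ p) ∂μ u
  have hp_pos : 0 < p := by linarith
  have := hμ t
  have h_LP : ∀ δ : ℝ, 0 < δ → ∀ s ≤ t, levyProkhorovEDist (μ t) (P.map (φ t)) ≤
      max (ENNReal.ofReal δ) (ENNReal.ofReal (C * Real.exp (-(p * lam) * (t - s))) *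
        ((1 + M) / ENNReal.ofReal (δ ^ p))) := by
    intro δ hδ s hst
    have := hμ s
    have h_coupling : ∀ x, ∃ X : Ω → EuclideanSpace ℝ (Fin d), Measurable X ∧
        P.map X = K t s x ∧ ∫ ω, ‖X ω - φ t ω‖ ^ p ∂P ≤
          C * Real.exp (-(p * lam) * (t - s)) * (1 + ‖x‖ ^ p) := fun x => by
      obtain ⟨X, hX, hX_law, hX_close⟩ := happrox t s hst x
      exact ⟨X, hX, hX_law, hX_close.trans_eq (by ring)⟩
    refine (levyProkhorovEDist_le_of_coupling P
      (Measure.measurable_of_measurable_coe _ (hK_meas t s hst))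
      (Measure.bind_eq_of_forall_lintegral_apply (hK_meas t s hst) (h_entrance t s hst))
      hp_pos hδ (hφ_Lp t) h_coupling ((le_iSup _ t).trans_lt h_moment).ne).trans ?_
    gcongr
    exact le_iSup (fun u => ∫⁻ x, ENNReal.ofReal (‖x‖ ^ p) ∂μ u) s
  refine measure_eq_of_levyProkhorovEDist_eq_zero <| ENNReal.eq_zero_of_forall_le_max_of_tendsto
    (tendsto_ofReal_mul_exp_neg_mul_sub_atBot (mul_pos hp_pos hlam) C t)
    fun δ hδ => ⟨_, ?_, (eventually_le_atBot t).mono (h_LP δ hδ)⟩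
  exact ENNReal.div_ne_top (by simpa using h_moment.ne) (by simpa using Real.rpow_pos_of_pos hδ p)

/-- **Uniqueness half of Theorem 2.5.**  Given transition kernels `K(t,s,x,·)` which can be
realised by random variables `X_t^{s,x}` converging to `φ(t)` in `L^p` at exponential rate,
every entrance measure of `K` with uniformly bounded `p`-th moments coincides with the laws
`ρ_t = law(φ(t))`. -/
theorem entrance_measure_unique {d : ℕ}
    {Ω : Type*} [MeasurableSpace Ω] (P : Measure Ω) [IsProbabilityMeasure P]
    (p : ℝ) (hp : 2 ≤ p) (lam : ℝ) (hlam : 0 < lam) (C : ℝ) (hC : 0 < C)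
    -- the two-parameter family of Markov transition kernels
    (K : ℝ → ℝ → EuclideanSpace ℝ (Fin d) → Measure (EuclideanSpace ℝ (Fin d)))
    (hK_prob : ∀ t s : ℝ, s ≤ t → ∀ x, IsProbabilityMeasure (K t s x))
    (hK_meas : ∀ t s : ℝ, s ≤ t → ∀ Γ : Set (EuclideanSpace ℝ (Fin d)),
      MeasurableSet Γ → Measurable fun x => K t s x Γ)
    -- the random path φ with laws ρ_t = law(φ(t))
    (φ : ℝ → Ω → EuclideanSpace ℝ (Fin d))
    (hφ_meas : ∀ t, Measurable (φ t))
    (hφ_Lp : ∀ t, MemLp (φ t) (ENNReal.ofReal p) P)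
    -- realisation of the kernels, exponentially close to φ in L^p
    (happrox : ∀ t s : ℝ, s ≤ t → ∀ x : EuclideanSpace ℝ (Fin d),
      ∃ X : Ω → EuclideanSpace ℝ (Fin d), Measurable X ∧ P.map X = K t s x ∧
        ∫ ω, ‖X ω - φ t ω‖ ^ p ∂P ≤ C * (1 + ‖x‖ ^ p) * Real.exp (-(p * lam) * (t - s))) :
    -- every entrance measure with uniformly bounded p-th moments equals ρ
    ∀ μ : ℝ → Measure (EuclideanSpace ℝ (Fin d)),
      (∀ t, IsProbabilityMeasure (μ t)) →
      (∀ t s : ℝ, s ≤ t → ∀ Γ : Set (EuclideanSpace ℝ (Fin d)), MeasurableSet Γ →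
        ∫⁻ x, K t s x Γ ∂(μ s) = μ t Γ) →
      (⨆ t : ℝ, ∫⁻ x, ENNReal.ofReal (‖x‖ ^ p) ∂(μ t)) < ⊤ →
      ∀ t : ℝ, μ t = P.map (φ t) :=
  entrance_measure_unique_general P p hp lam hlam C K hK_meas φ hφ_Lp happrox
end

section
/- Let X be a metric space and (P_t)_{t≥0} a Feller Markov semigroup of transition kernels on X. Let (ρ_s)_{s∈ℝ} be an entrance measure for the semigroup, i.e., P_t^*ρ_s = ρ_{t+s} for all t ≥ 0 and s ∈ ℝ, which is quasi-periodic with periods τ₁, τ₂ whose reciprocals are rationally linearly independent: there is a weakly continuous ρ̃ : ℝ² → Prob(X) with ρ̃_{t,t} = ρ_t, ρ̃_{t+τ₁,s} = ρ̃_{t,s} and ρ̃_{t,s+τ₂} = ρ̃_{t,s}. If the family {ρ̄_T := (1/T)∫_0^T ρ_s ds : T > 0} is tight, then ν := (1/(τ₁τ₂))∫_0^{τ₁}∫_0^{τ₂} ρ̃_{s₁,s₂} ds₁ ds₂ is an invariant probability measure: P_t^*ν = ν for all t ≥ 0. -/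
open MeasureTheory Set Filter Function ProbabilityTheory
open scoped ENNReal NNReal BoundedContinuousFunction

/-!
Weak continuity of `ρ̃` and the Feller property make `(s₁, s₂) ↦ P_t^* ρ̃_{s₁,s₂}` and
`(s₁, s₂) ↦ ρ̃_{t+s₁,t+s₂}` continuous and doubly periodic, and the entrance property makes them
agree on the diagonal. Since `τ₁ / τ₂` is irrational, `ℤτ₁ + ℤτ₂` is dense in `ℝ`, so the
translates of the diagonal by the period lattice are dense and the two maps agree everywhere.
Averaging over a period rectangle, `P_t^* ν` is the average of the translated family, which is `ν`
again because averages of periodic functions over a full period are translation invariant.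
-/

theorem irrational_div_of_int_div_add_div_ne_zero {τ₁ τ₂ : ℝ}
    (hindep : ∀ k₁ k₂ : ℤ, ¬(k₁ = 0 ∧ k₂ = 0) → (k₁ : ℝ) / τ₁ + (k₂ : ℝ) / τ₂ ≠ 0) :
    Irrational (τ₁ / τ₂) := by
  have hτ₁ : τ₁ ≠ 0 := fun h => hindep 1 0 (by simp) (by simp [h])
  have hτ₂ : τ₂ ≠ 0 := fun h => hindep 0 1 (by simp) (by simp [h])
  rintro ⟨r, hr⟩
  refine hindep r.num (-r.den) (by simp [r.den_nz]) ?_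
  have hr' : (r.num : ℝ) * τ₂ = r.den * τ₁ := by
    rw [← Rat.num_div_den r] at hr
    push_cast at hr
    field_simp at hr
    linarith
  push_cast
  field_simp
  linarith

theorem eq_of_periodic_of_diagonal_eq {Y : Type*} [TopologicalSpace Y] [T2Space Y]
    {τ₁ τ₂ : ℝ} (hτ : Irrational (τ₁ / τ₂)) {f g : ℝ → ℝ → Y}
    (hf : Continuous (uncurry f)) (hg : Continuous (uncurry g))
    (hf₁ : ∀ y, Periodic (f · y) τ₁) (hf₂ : ∀ x, Periodic (f x) τ₂)
    (hg₁ : ∀ y, Periodic (g · y) τ₁) (hg₂ : ∀ x, Periodic (g x) τ₂)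
    (hdiag : ∀ s, f s s = g s s) : f = g := by
  have reduce : ∀ h : ℝ → ℝ → Y, (∀ y, Periodic (h · y) τ₁) → (∀ x, Periodic (h x) τ₂) →
      ∀ (y : ℝ) (m n : ℤ), h (y + (m • τ₁ + n • τ₂)) y = h (y + n • τ₂) (y + n • τ₂) := by
    intro h h₁ h₂ y m n
    calc h (y + (m • τ₁ + n • τ₂)) y = h (y + n • τ₂ + m • τ₁) y := by
          rw [add_comm (m • τ₁), add_assoc]
      _ = h (y + n • τ₂) y := (h₁ y).zsmul m _
      _ = h (y + n • τ₂) (y + n • τ₂) := ((h₂ _).zsmul n y).symm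
  funext x y
  -- on the dense set `ℤτ₁ + ℤτ₂`, periodicity moves `(y + d, y)` onto the diagonal
  have hslice : (fun d => f (y + d) y) = fun d => g (y + d) y := by
    refine Continuous.ext_on (dense_addSubgroupClosure_pair_iff.2 hτ)
      (hf.comp (by fun_prop : Continuous fun d : ℝ => (y + d, y)))
      (hg.comp (by fun_prop : Continuous fun d : ℝ => (y + d, y))) ?_
    rintro d hd
    obtain ⟨m, n, rfl⟩ := AddSubgroup.mem_closure_pair.1 hd
    simp only [reduce f hf₁ hf₂, reduce g hg₁ hg₂, hdiag]
  simpa using congrFun hslice (x - y)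

theorem Function.Periodic.setLIntegral_Ioc_comp_add {F : ℝ → ℝ≥0∞} {τ : ℝ} (hF : Periodic F τ)
    (hτ : 0 < τ) (t : ℝ) : ∫⁻ s in Ioc 0 τ, F (t + s) = ∫⁻ s in Ioc 0 τ, F s := by
  rw [(measurePreserving_add_left volume t).setLIntegral_comp_emb (measurableEmbedding_addLeft t),
    image_const_add_Ioc, add_zero]
  have hinv : ∀ (g : AddSubgroup.zmultiples τ) (x : ℝ), F (g +ᵥ x) = F x := by
    rintro ⟨_, k, rfl⟩ x
    simpa [add_comm] using (hF.zsmul k) x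
  have h :=
    (isAddFundamentalDomain_Ioc hτ t).setLIntegral_eq (isAddFundamentalDomain_Ioc hτ 0) F hinv
  rwa [zero_add] at h

/-- Closed sets generate the Borel σ-algebra, and their measures are limits of integrals of
bounded continuous functions, which depend continuously on the measure. -/
theorem Continuous.measurable_toMeasure {α X : Type*} [TopologicalSpace α] [MeasurableSpace α]
    [OpensMeasurableSpace α] [TopologicalSpace X] [HasOuterApproxClosed X] [MeasurableSpace X]
    [BorelSpace X] {μ : α → ProbabilityMeasure X} (hμ : Continuous μ) :
    Measurable fun a => (μ a : Measure X) := by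
  refine .measure_of_isPiSystem_of_isProbabilityMeasure
    (BorelSpace.measurable_eq.trans borel_eq_generateFrom_isClosed) isPiSystem_isClosed
    fun F hF => ?_
  refine measurable_of_tendsto_metrizable (fun n => ?_) (tendsto_pi_nhds.2 fun a =>
    HasOuterApproxClosed.tendsto_lintegral_apprSeq hF (μ a : Measure X))
  exact ((ProbabilityMeasure.continuous_lintegral_boundedContinuousFunction _).comp hμ).measurable

namespace MeasureTheory.ProbabilityMeasure

variable {α β : Type*} [MeasurableSpace α] [MeasurableSpace β]

/-- The action `μ ↦ P^* μ` of a Markov kernel on probability measures. -/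
noncomputable def bind (μ : ProbabilityMeasure α) (κ : Kernel α β) [IsMarkovKernel κ] :
    ProbabilityMeasure β :=
  ⟨κ ∘ₘ μ, inferInstance⟩

@[simp]
theorem toMeasure_bind (μ : ProbabilityMeasure α) (κ : Kernel α β) [IsMarkovKernel κ] :
    (μ.bind κ : Measure β) = κ ∘ₘ μ :=
  rfl

end MeasureTheory.ProbabilityMeasure

section Feller

variable {X : Type*} [TopologicalSpace X] [MeasurableSpace X] [OpensMeasurableSpace X]

theorem exists_lintegral_eq_of_feller {κ : X → Measure X} [∀ x, IsFiniteMeasure (κ x)]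
    (hκ : ∀ f : X →ᵇ ℝ, ∃ g : X →ᵇ ℝ, ∀ x, g x = ∫ y, f y ∂κ x) (f : X →ᵇ ℝ≥0) :
    ∃ g : X →ᵇ ℝ≥0, ∀ x, ∫⁻ y, f y ∂κ x = g x := by
  obtain ⟨g, hg⟩ := hκ (f.comp _ isometry_subtype_coe.lipschitz)
  refine ⟨g.nnrealPart, fun x => ?_⟩
  rw [lintegral_coe_eq_integral _ (f.integrable_of_nnreal (κ x)),
    BoundedContinuousFunction.nnrealPart_coeFn_eq, comp_apply, hg]
  rfl

theorem continuous_bind_of_feller (κ : Kernel X X) [IsMarkovKernel κ]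
    (hκ : ∀ f : X →ᵇ ℝ, ∃ g : X →ᵇ ℝ, ∀ x, g x = ∫ y, f y ∂κ x) :
    Continuous fun μ : ProbabilityMeasure X => μ.bind κ := by
  refine ProbabilityMeasure.continuous_iff_forall_continuous_lintegral.2 fun f => ?_
  obtain ⟨g, hg⟩ := exists_lintegral_eq_of_feller hκ f
  simp_rw [ProbabilityMeasure.toMeasure_bind,
    Measure.lintegral_bind κ.aemeasurable f.measurable_coe_ennreal_comp.aemeasurable, hg]
  exact ProbabilityMeasure.continuous_lintegral_boundedContinuousFunction g

end Feller

theorem MeasureTheory.ProbabilityMeasure.bind_quasiPeriodic_eq {X : Type*} [TopologicalSpace X]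
    [HasOuterApproxClosed X] [MeasurableSpace X] [BorelSpace X] (κ : Kernel X X) [IsMarkovKernel κ]
    (hκ : ∀ f : X →ᵇ ℝ, ∃ g : X →ᵇ ℝ, ∀ x, g x = ∫ y, f y ∂κ x)
    {τ₁ τ₂ : ℝ} (hτ : Irrational (τ₁ / τ₂)) {ρ : ℝ → ℝ → ProbabilityMeasure X}
    (hρ : Continuous (uncurry ρ)) (hρ₁ : ∀ s₂, Periodic (ρ · s₂) τ₁)
    (hρ₂ : ∀ s₁, Periodic (ρ s₁) τ₂) {t : ℝ} (hdiag : ∀ s, (ρ s s).bind κ = ρ (t + s) (t + s))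
    (s₁ s₂ : ℝ) : (ρ s₁ s₂).bind κ = ρ (t + s₁) (t + s₂) := by
  have hf : Continuous (uncurry fun s₁ s₂ => (ρ s₁ s₂).bind κ) :=
    (continuous_bind_of_feller κ hκ).comp hρ
  have hg : Continuous (uncurry fun s₁ s₂ => ρ (t + s₁) (t + s₂)) :=
    hρ.comp (by fun_prop : Continuous fun q : ℝ × ℝ => (t + q.1, t + q.2))
  refine congrFun₂ (eq_of_periodic_of_diagonal_eq hτ hf hg ?_ ?_ ?_ ?_ hdiag) s₁ s₂
  · exact fun s₂ s₁ => by simp only [hρ₁ s₂ s₁]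
  · exact fun s₁ s₂ => by simp only [hρ₂ s₁ s₂]
  · exact fun s₂ s₁ => by simp only [← add_assoc, hρ₁ _ _]
  · exact fun s₁ s₂ => by simp only [← add_assoc, hρ₂ _ _]

section PeriodAverage

variable {X : Type*} [MeasurableSpace X] {τ₁ τ₂ : ℝ}

variable (τ₁ τ₂) in
/-- The measure `(τ₁ τ₂)⁻¹ ∫₀^τ₁ ∫₀^τ₂ ρ s₁ s₂ ds₂ ds₁`. -/
noncomputable def periodAverage (ρ : ℝ → ℝ → Measure X) : Measure X :=
  (ENNReal.ofReal (τ₁ * τ₂))⁻¹ •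
    ((volume.restrict (Ioc 0 τ₁)).prod (volume.restrict (Ioc 0 τ₂))).bind (uncurry ρ)

theorem periodAverage_apply {ρ : ℝ → ℝ → Measure X} (hρ : Measurable (uncurry ρ)) {Γ : Set X}
    (hΓ : MeasurableSet Γ) :
    periodAverage τ₁ τ₂ ρ Γ = (ENNReal.ofReal (τ₁ * τ₂))⁻¹ *
      ∫⁻ s₁ in Ioc 0 τ₁, ∫⁻ s₂ in Ioc 0 τ₂, ρ s₁ s₂ Γ := by
  rw [periodAverage, Measure.smul_apply, Measure.bind_apply hΓ hρ.aemeasurable,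
    lintegral_prod (fun q => uncurry ρ q Γ) ((Measure.measurable_coe hΓ).comp hρ).aemeasurable,
    smul_eq_mul]
  rfl

theorem isProbabilityMeasure_periodAverage (hτ₁ : 0 < τ₁) (hτ₂ : 0 < τ₂)
    {ρ : ℝ → ℝ → Measure X} (hρ : Measurable (uncurry ρ))
    [∀ s₁ s₂, IsProbabilityMeasure (ρ s₁ s₂)] : IsProbabilityMeasure (periodAverage τ₁ τ₂ ρ) := by
  refine ⟨?_⟩
  simp [periodAverage_apply hρ MeasurableSet.univ, Real.volume_Ioc, ← ENNReal.ofReal_mul hτ₂.le,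
    mul_comm τ₂, ENNReal.inv_mul_cancel, hτ₁, hτ₂]

theorem comp_periodAverage (κ : Kernel X X) {ρ : ℝ → ℝ → Measure X} (hρ : Measurable (uncurry ρ)) :
    κ ∘ₘ periodAverage τ₁ τ₂ ρ = periodAverage τ₁ τ₂ fun s₁ s₂ => κ ∘ₘ ρ s₁ s₂ := by
  rw [periodAverage, periodAverage, Measure.comp_smul,
    Measure.bind_bind hρ.aemeasurable κ.aemeasurable]
  rfl

theorem periodAverage_comp_add (hτ₁ : 0 < τ₁) (hτ₂ : 0 < τ₂) {ρ : ℝ → ℝ → Measure X}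
    (hρ : Measurable (uncurry ρ)) (hρ₁ : ∀ s₂, Periodic (ρ · s₂) τ₁)
    (hρ₂ : ∀ s₁, Periodic (ρ s₁) τ₂) (a b : ℝ) :
    periodAverage τ₁ τ₂ (fun s₁ s₂ => ρ (a + s₁) (b + s₂)) = periodAverage τ₁ τ₂ ρ := by
  ext Γ hΓ
  rw [periodAverage_apply (ρ := fun s₁ s₂ => ρ (a + s₁) (b + s₂))
    (hρ.comp (by fun_prop : Measurable fun q : ℝ × ℝ => (a + q.1, b + q.2))) hΓ,
    periodAverage_apply hρ hΓ]
  congr 1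
  have inner : ∀ s₁, ∫⁻ s₂ in Ioc 0 τ₂, ρ (a + s₁) (b + s₂) Γ =
      ∫⁻ s₂ in Ioc 0 τ₂, ρ (a + s₁) s₂ Γ := fun s₁ =>
    Periodic.setLIntegral_Ioc_comp_add (F := fun s₂ => ρ (a + s₁) s₂ Γ)
      (fun s₂ => by simp only [hρ₂ _ s₂]) hτ₂ b
  simp_rw [inner]
  exact Periodic.setLIntegral_Ioc_comp_add (F := fun s₁ => ∫⁻ s₂ in Ioc 0 τ₂, ρ s₁ s₂ Γ)
    (fun s₁ => by simp only [hρ₁ _ s₁]) hτ₁ a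

end PeriodAverage

theorem quasiPeriodic_measure_average_invariant_general
    {X : Type*} [MetricSpace X] [MeasurableSpace X] [BorelSpace X]
    -- the Markov semigroup (P_t)_{t ≥ 0}
    (κ : ℝ → X → Measure X)
    (hκ_prob : ∀ t : ℝ, 0 ≤ t → ∀ x, IsProbabilityMeasure (κ t x))
    (hκ_meas : ∀ t : ℝ, 0 ≤ t → ∀ Γ : Set X, MeasurableSet Γ → Measurable fun x => κ t x Γ)
    -- Feller property
    (hFeller : ∀ t : ℝ, 0 ≤ t → ∀ f : BoundedContinuousFunction X ℝ,
      ∃ g : BoundedContinuousFunction X ℝ, ∀ x, g x = ∫ y, f y ∂(κ t x))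
    -- the entrance measure (ρ_s)
    (ρ : ℝ → Measure X)
    (hentrance : ∀ t : ℝ, 0 ≤ t → ∀ s : ℝ, ∀ Γ : Set X, MeasurableSet Γ →
      ∫⁻ x, κ t x Γ ∂(ρ s) = ρ (t + s) Γ)
    -- quasi-periodicity with rationally independent reciprocals of the periods
    (τ₁ τ₂ : ℝ) (hτ₁ : 0 < τ₁) (hτ₂ : 0 < τ₂)
    (hindep : ∀ k₁ k₂ : ℤ, ¬(k₁ = 0 ∧ k₂ = 0) → (k₁ : ℝ) / τ₁ + (k₂ : ℝ) / τ₂ ≠ 0)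
    (ρt : ℝ → ℝ → ProbabilityMeasure X)
    (hρt_cont : Continuous fun q : ℝ × ℝ => ρt q.1 q.2)
    (hdiag : ∀ t : ℝ, (ρt t t : Measure X) = ρ t)
    (hper₁ : ∀ t s : ℝ, ρt (t + τ₁) s = ρt t s)
    (hper₂ : ∀ t s : ℝ, ρt t (s + τ₂) = ρt t s) :
    -- the double average ν (defined setwise) is an invariant probability measure
    ∀ ν : Measure X,
      (∀ Γ : Set X, MeasurableSet Γ →
        ν Γ = (ENNReal.ofReal (τ₁ * τ₂))⁻¹ *
          ∫⁻ s₁ in Ioc (0 : ℝ) τ₁, ∫⁻ s₂ in Ioc (0 : ℝ) τ₂, (ρt s₁ s₂ : Measure X) Γ) →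
      IsProbabilityMeasure ν ∧
      ∀ t : ℝ, 0 ≤ t → ∀ Γ : Set X, MeasurableSet Γ →
        ∫⁻ x, κ t x Γ ∂ν = ν Γ := by
  intro ν hν
  have hρt : Measurable (uncurry fun s₁ s₂ => (ρt s₁ s₂ : Measure X)) :=
    hρt_cont.measurable_toMeasure
  obtain rfl : ν = periodAverage τ₁ τ₂ fun s₁ s₂ => ρt s₁ s₂ :=
    Measure.ext fun Γ hΓ => by rw [hν Γ hΓ, periodAverage_apply hρt hΓ]
  refine ⟨isProbabilityMeasure_periodAverage hτ₁ hτ₂ hρt, fun t ht Γ hΓ => ?_⟩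
  let P : Kernel X X := ⟨κ t, Measure.measurable_of_measurable_coe _ (hκ_meas t ht)⟩
  have : IsMarkovKernel P := ⟨hκ_prob t ht⟩
  have hentrance_diag : ∀ s, (ρt s s).bind P = ρt (t + s) (t + s) := fun s => by
    ext Γ hΓ
    rw [ProbabilityMeasure.toMeasure_bind, Measure.bind_apply hΓ P.aemeasurable, hdiag, hdiag]
    exact hentrance t ht s Γ hΓ
  have hshift := ProbabilityMeasure.bind_quasiPeriodic_eq P (hFeller t ht)
    (irrational_div_of_int_div_add_div_ne_zero hindep) hρt_cont (fun s₂ s₁ => hper₁ s₁ s₂) hper₂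
    hentrance_diag
  calc ∫⁻ x, κ t x Γ ∂periodAverage τ₁ τ₂ (fun s₁ s₂ => ρt s₁ s₂)
      = (P ∘ₘ periodAverage τ₁ τ₂ fun s₁ s₂ => ρt s₁ s₂) Γ :=
        (Measure.bind_apply hΓ P.aemeasurable).symm
    _ = periodAverage τ₁ τ₂ (fun s₁ s₂ => ρt (t + s₁) (t + s₂)) Γ := by
        simp only [comp_periodAverage P hρt, ← ProbabilityMeasure.toMeasure_bind, hshift]
    _ = periodAverage τ₁ τ₂ (fun s₁ s₂ => ρt s₁ s₂) Γ := by
        rw [periodAverage_comp_add hτ₁ hτ₂ hρt (fun s₂ s₁ => by simp only [hper₁])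
          (fun s₁ s₂ => by simp only [hper₂])]

/-- **Theorem 3.15.**  Let `(P_t)` be a Feller Markov semigroup on a metric space `X` and
`(ρ_s)` an entrance measure which is quasi-periodic with periods `τ₁, τ₂` whose reciprocals
are rationally linearly independent (witnessed by a weakly continuous `ρ̃` with
`ρ̃_{t,t} = ρ_t` and the two periodicities).  If the Cesàro averages
`ρ̄_T = (1/T)∫_0^T ρ_s ds` are tight, then
`ν = (1/(τ₁τ₂))∫_0^{τ₁}∫_0^{τ₂} ρ̃_{s₁,s₂} ds₁ ds₂` is an invariant probability
measure: `P_t^* ν = ν` for all `t ≥ 0`. -/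
theorem quasiPeriodic_measure_average_invariant
    {X : Type*} [MetricSpace X] [MeasurableSpace X] [BorelSpace X]
    -- the Markov semigroup (P_t)_{t ≥ 0}
    (κ : ℝ → X → Measure X)
    (hκ_prob : ∀ t : ℝ, 0 ≤ t → ∀ x, IsProbabilityMeasure (κ t x))
    (hκ_meas : ∀ t : ℝ, 0 ≤ t → ∀ Γ : Set X, MeasurableSet Γ → Measurable fun x => κ t x Γ)
    (hκ_zero : ∀ x, κ 0 x = Measure.dirac x)
    (hκ_CK : ∀ t s : ℝ, 0 ≤ t → 0 ≤ s → ∀ x, ∀ Γ : Set X, MeasurableSet Γ →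
      κ (t + s) x Γ = ∫⁻ y, κ t y Γ ∂(κ s x))
    -- Feller property
    (hFeller : ∀ t : ℝ, 0 ≤ t → ∀ f : BoundedContinuousFunction X ℝ,
      ∃ g : BoundedContinuousFunction X ℝ, ∀ x, g x = ∫ y, f y ∂(κ t x))
    -- the entrance measure (ρ_s)
    (ρ : ℝ → Measure X) (hρ_prob : ∀ s, IsProbabilityMeasure (ρ s))
    (hentrance : ∀ t : ℝ, 0 ≤ t → ∀ s : ℝ, ∀ Γ : Set X, MeasurableSet Γ →
      ∫⁻ x, κ t x Γ ∂(ρ s) = ρ (t + s) Γ)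
    -- quasi-periodicity with rationally independent reciprocals of the periods
    (τ₁ τ₂ : ℝ) (hτ₁ : 0 < τ₁) (hτ₂ : 0 < τ₂)
    (hindep : ∀ k₁ k₂ : ℤ, ¬(k₁ = 0 ∧ k₂ = 0) → (k₁ : ℝ) / τ₁ + (k₂ : ℝ) / τ₂ ≠ 0)
    (ρt : ℝ → ℝ → ProbabilityMeasure X)
    (hρt_cont : Continuous fun q : ℝ × ℝ => ρt q.1 q.2)
    (hdiag : ∀ t : ℝ, (ρt t t : Measure X) = ρ t)
    (hper₁ : ∀ t s : ℝ, ρt (t + τ₁) s = ρt t s)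
    (hper₂ : ∀ t s : ℝ, ρt t (s + τ₂) = ρt t s)
    -- tightness of the Cesàro averages ρ̄_T
    (htight : ∀ ε : ENNReal, 0 < ε → ∃ K : Set X, IsCompact K ∧
      ∀ T : ℝ, 0 < T → 1 - ε < (ENNReal.ofReal T)⁻¹ * ∫⁻ s in Ioc (0 : ℝ) T, ρ s K) :
    -- the double average ν (defined setwise) is an invariant probability measure
    ∀ ν : Measure X,
      (∀ Γ : Set X, MeasurableSet Γ →
        ν Γ = (ENNReal.ofReal (τ₁ * τ₂))⁻¹ *
          ∫⁻ s₁ in Ioc (0 : ℝ) τ₁, ∫⁻ s₂ in Ioc (0 : ℝ) τ₂, (ρt s₁ s₂ : Measure X) Γ) →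
      IsProbabilityMeasure ν ∧
      ∀ t : ℝ, 0 ≤ t → ∀ Γ : Set X, MeasurableSet Γ →
        ∫⁻ x, κ t x Γ ∂ν = ν Γ :=
  quasiPeriodic_measure_average_invariant_general κ hκ_prob hκ_meas hFeller ρ hentrance τ₁ τ₂ hτ₁
    hτ₂ hindep ρt hρt_cont hdiag hper₁ hper₂
end

section
/- Let τ₁, τ₂ > 0 and X̃ = (ℝ/τ₁ℤ) × (ℝ/τ₂ℤ) × ℝ^d. Let P(t,s,x,·) be a two-parameter family of Markov transition kernels on ℝ^d and, for each (s₁,s₂) ∈ ℝ² and t ≥ 0, let Q^{s₁,s₂}(t,x,·) be probability kernels on ℝ^d, jointly measurable, satisfying the periodicity Q^{s₁+τ₁,s₂} = Q^{s₁,s₂} = Q^{s₁,s₂+τ₂} and the diagonal compatibility Q^{s,s}(t,x,Γ) = P(t+s,s,x,Γ) for all s ∈ ℝ, t ≥ 0, x ∈ ℝ^d, and Borel Γ. Define the lifted kernels on X̃ by P̃(t,(s₁,s₂,x),Γ̃) := Q^{s₁,s₂}(t,x,{y ∈ ℝ^d : (s₁+t mod τ₁, s₂+t mod τ₂, y) ∈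 Γ̃}). If (ρ_s)_{s∈ℝ} is an entrance measure of P, then μ̃_s := δ_{s mod τ₁} ⊗ δ_{s mod τ₂} ⊗ ρ_s satisfies P̃_t^*μ̃_s = μ̃_{t+s} for all t ≥ 0 and s ∈ ℝ. -/
open MeasureTheory Set

/-- Borel structure on the cylinder `X̃ = (ℝ/τ₁ℤ) × (ℝ/τ₂ℤ) × ℝ^d`. -/
noncomputable instance cylinderBorel' (τ₁ τ₂ : ℝ) [Fact (0 < τ₁)] [Fact (0 < τ₂)] (d : ℕ) :
    BorelSpace (AddCircle τ₁ × AddCircle τ₂ × EuclideanSpace ℝ (Fin d)) :=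
  Prod.borelSpace

/-- The lifted measure `μ̃_s = δ_{s mod τ₁} ⊗ δ_{s mod τ₂} ⊗ ρ_s` on the cylinder. -/
noncomputable def liftedMeasure (τ₁ τ₂ : ℝ) {d : ℕ}
    (ρ : ℝ → Measure (EuclideanSpace ℝ (Fin d))) (s : ℝ) :
    Measure (AddCircle τ₁ × AddCircle τ₂ × EuclideanSpace ℝ (Fin d)) :=
  (Measure.dirac ((s : ℝ) : AddCircle τ₁)).prod
    ((Measure.dirac ((s : ℝ) : AddCircle τ₂)).prod (ρ s))

lemma liftedMeasure_eq_map (τ₁ τ₂ : ℝ) [Fact (0 < τ₁)] [Fact (0 < τ₂)] {d : ℕ}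
    (ρ : ℝ → Measure (EuclideanSpace ℝ (Fin d))) (hρ : ∀ s, IsProbabilityMeasure (ρ s))
    (s : ℝ) :
    liftedMeasure τ₁ τ₂ ρ s =
      (ρ s).map (fun x => (((s : ℝ) : AddCircle τ₁), ((s : ℝ) : AddCircle τ₂), x)) := by
  haveI := hρ s
  rw [liftedMeasure, Measure.dirac_prod, Measure.dirac_prod,
    Measure.map_map measurable_prodMk_left measurable_prodMk_left]
  rfl

/-- **Theorem 3.10 (lift of an entrance measure to the cylinder).**  Given a two-parameter
family of Markov transition kernels `P(t,s,x,·)` on `ℝ^d`, reparametrised kernels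
`Q^{s₁,s₂}(t,x,·)` which are `τ₁`- resp. `τ₂`-periodic in `s₁, s₂` and satisfy the
diagonal compatibility `Q^{s,s}(t,x,Γ) = P(t+s,s,x,Γ)`, and the lifted kernels
`P̃(t,(s₁,s₂,x),Γ̃) = Q^{s₁,s₂}(t,x,{y : (s₁+t mod τ₁, s₂+t mod τ₂, y) ∈ Γ̃})` on the
cylinder, every entrance measure `(ρ_s)` of `P` lifts to an entrance measure
`μ̃_s = δ_{s mod τ₁} ⊗ δ_{s mod τ₂} ⊗ ρ_s` of `P̃`: `P̃_t^* μ̃_s = μ̃_{t+s}`. -/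
theorem lifted_entrance_measure (τ₁ τ₂ : ℝ) [Fact (0 < τ₁)] [Fact (0 < τ₂)] {d : ℕ}
    -- the two-parameter family of Markov transition kernels on ℝ^d
    (Pk : ℝ → ℝ → EuclideanSpace ℝ (Fin d) → Measure (EuclideanSpace ℝ (Fin d)))
    (hPk_prob : ∀ t s : ℝ, s ≤ t → ∀ x, IsProbabilityMeasure (Pk t s x))
    (hPk_meas : ∀ t s : ℝ, s ≤ t → ∀ Γ : Set (EuclideanSpace ℝ (Fin d)),
      MeasurableSet Γ → Measurable fun x => Pk t s x Γ)
    -- the reparametrised kernels Q^{s₁,s₂}(t,x,·)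
    (Q : ℝ → ℝ → ℝ → EuclideanSpace ℝ (Fin d) → Measure (EuclideanSpace ℝ (Fin d)))
    (hQ_prob : ∀ s₁ s₂ t : ℝ, 0 ≤ t → ∀ x, IsProbabilityMeasure (Q s₁ s₂ t x))
    (hQ_meas : ∀ Γ : Set (EuclideanSpace ℝ (Fin d)), MeasurableSet Γ →
      Measurable fun q : ℝ × ℝ × ℝ × EuclideanSpace ℝ (Fin d) =>
        Q q.1 q.2.1 q.2.2.1 q.2.2.2 Γ)
    (hQper₁ : ∀ s₁ s₂ : ℝ, Q (s₁ + τ₁) s₂ = Q s₁ s₂)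
    (hQper₂ : ∀ s₁ s₂ : ℝ, Q s₁ (s₂ + τ₂) = Q s₁ s₂)
    (hQdiag : ∀ s t : ℝ, 0 ≤ t → ∀ x, ∀ Γ : Set (EuclideanSpace ℝ (Fin d)),
      MeasurableSet Γ → Q s s t x Γ = Pk (t + s) s x Γ)
    -- the lifted kernels on the cylinder
    (Pt : ℝ → (AddCircle τ₁ × AddCircle τ₂ × EuclideanSpace ℝ (Fin d)) →
      Set (AddCircle τ₁ × AddCircle τ₂ × EuclideanSpace ℝ (Fin d)) → ENNReal)
    (hPt : ∀ t : ℝ, 0 ≤ t → ∀ s₁ s₂ : ℝ, ∀ x : EuclideanSpace ℝ (Fin d),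
      ∀ Γ : Set (AddCircle τ₁ × AddCircle τ₂ × EuclideanSpace ℝ (Fin d)),
      Pt t (((s₁ : ℝ) : AddCircle τ₁), ((s₂ : ℝ) : AddCircle τ₂), x) Γ =
        Q s₁ s₂ t x {y | ((((s₁ + t : ℝ)) : AddCircle τ₁),
          (((s₂ + t : ℝ)) : AddCircle τ₂), y) ∈ Γ})
    -- the entrance measure of Pk
    (ρ : ℝ → Measure (EuclideanSpace ℝ (Fin d)))
    (hρ_prob : ∀ s, IsProbabilityMeasure (ρ s))
    (hρ_entrance : ∀ t s : ℝ, s ≤ t → ∀ Γ : Set (EuclideanSpace ℝ (Fin d)),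
      MeasurableSet Γ → ∫⁻ x, Pk t s x Γ ∂(ρ s) = ρ t Γ) :
    ∀ t : ℝ, 0 ≤ t → ∀ s : ℝ,
      ∀ Γ : Set (AddCircle τ₁ × AddCircle τ₂ × EuclideanSpace ℝ (Fin d)),
      MeasurableSet Γ →
        ∫⁻ z, Pt t z Γ ∂(liftedMeasure τ₁ τ₂ ρ s) = liftedMeasure τ₁ τ₂ ρ (t + s) Γ := by
  intro t ht s Γ hΓ
  -- the section of Γ at the shifted angles
  set Γ' : Set (EuclideanSpace ℝ (Fin d)) :=
    {y | ((((s + t : ℝ)) : AddCircle τ₁), (((s + t : ℝ)) : AddCircle τ₂), y) ∈ Γ} with hΓ'def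
  have hΓ' : MeasurableSet Γ' := by
    have : Measurable fun y : EuclideanSpace ℝ (Fin d) =>
        ((((s + t : ℝ)) : AddCircle τ₁), (((s + t : ℝ)) : AddCircle τ₂), y) :=
      measurable_const.prodMk (measurable_const.prodMk measurable_id)
    exact this hΓ
  rw [liftedMeasure_eq_map τ₁ τ₂ ρ hρ_prob s, liftedMeasure_eq_map τ₁ τ₂ ρ hρ_prob (t + s)]
  have hemb : Measurable fun x : EuclideanSpace ℝ (Fin d) =>
      (((s : ℝ) : AddCircle τ₁), ((s : ℝ) : AddCircle τ₂), x) :=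
    measurable_const.prodMk (measurable_const.prodMk measurable_id)
  have hemb' : Measurable fun x : EuclideanSpace ℝ (Fin d) =>
      ((((t + s : ℝ)) : AddCircle τ₁), (((t + s : ℝ)) : AddCircle τ₂), x) :=
    measurable_const.prodMk (measurable_const.prodMk measurable_id)
  have hg : Measurable fun x => Pk (t + s) s x Γ' :=
    hPk_meas (t + s) s (by linarith) Γ' hΓ'
  set a₁ : AddCircle τ₁ := ((s : ℝ) : AddCircle τ₁)
  set a₂ : AddCircle τ₂ := ((s : ℝ) : AddCircle τ₂)
  set μ := (ρ s).map (fun x : EuclideanSpace ℝ (Fin d) => (a₁, a₂, x)) with hμ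
  have key : ∀ x : EuclideanSpace ℝ (Fin d),
      Pt t (a₁, a₂, x) Γ = Pk (t + s) s x Γ' := by
    intro x
    rw [hPt t ht s s x Γ, hQdiag s t ht x Γ' hΓ']
  -- the diagonal set where the two integrands agree
  have hD : MeasurableSet {z : AddCircle τ₁ × AddCircle τ₂ × EuclideanSpace ℝ (Fin d) |
      z.1 = a₁ ∧ z.2.1 = a₂} := by
    exact (measurable_fst (measurableSet_singleton a₁)).inter
      ((measurable_fst.comp measurable_snd) (measurableSet_singleton a₂))
  have hDnull : μ {z : AddCircle τ₁ × AddCircle τ₂ × EuclideanSpace ℝ (Fin d) |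
      z.1 = a₁ ∧ z.2.1 = a₂}ᶜ = 0 := by
    rw [hμ, Measure.map_apply hemb hD.compl]
    have hpre : (fun x : EuclideanSpace ℝ (Fin d) => (a₁, a₂, x)) ⁻¹'
        {z : AddCircle τ₁ × AddCircle τ₂ × EuclideanSpace ℝ (Fin d) |
          z.1 = a₁ ∧ z.2.1 = a₂}ᶜ = ∅ := by
      ext x; simp
    rw [hpre]
    exact measure_empty
  have hae : (fun z => Pt t z Γ) =ᵐ[μ]
      (fun z : AddCircle τ₁ × AddCircle τ₂ × EuclideanSpace ℝ (Fin d) =>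
        Pk (t + s) s z.2.2 Γ') := by
    refine Filter.eventuallyEq_of_mem (MeasureTheory.mem_ae_iff.mpr hDnull) ?_
    rintro ⟨z₁, z₂, z₃⟩ ⟨h1, h2⟩
    simp only at h1 h2
    subst h1; subst h2
    exact key z₃
  have hg2 : Measurable fun z : AddCircle τ₁ × AddCircle τ₂ × EuclideanSpace ℝ (Fin d) =>
      Pk (t + s) s z.2.2 Γ' := hg.comp (measurable_snd.comp measurable_snd)
  rw [lintegral_congr_ae hae, hμ, lintegral_map hg2 hemb,
    Measure.map_apply hemb' hΓ]
  have := hρ_entrance (t + s) s (by linarith) Γ' hΓ'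
  simp only [Function.comp] at this ⊢
  rw [this]
  congr 1
  ext y
  simp only [hΓ'def, mem_preimage, mem_setOf_eq, add_comm s t]
end

section
/- Let (θ_t)_{t∈ℝ} be a measurable group of measure-preserving transformations of a probability space (Ω,F,P), let τ₁, τ₂ > 0, and let K : ℝ² × Δ × ℝ^d × Ω → ℝ^d, written (r₁,r₂,t,s,x,ω) ↦ K^{r₁,r₂}(t,s,x,ω), be jointly measurable and satisfy, for each fixed choice of the deterministic arguments: (i) periodicity: K^{r₁+τ₁,r₂}(t,s,x,·) = K^{r₁,r₂}(t,s,x,·) = K^{r₁,r₂+τ₂}(t,s,x,·) P-a.s.; (ii) flow property: for all s ≤ r ≤ t, K^{r₁,r₂}(t,r,K^{r₁,r₂}(r,s,x,ω),ω) = K^{r₁,r₂}(t,s,x,ω) for P-a.e. ω; (iii) shift property: for all r ∈ ℝ and t ≥ s, K^{r₁,r₂}(t+r,s+r,x,θ_{−r}ω) = K^{r₁+r,r₂+r}(t,s,x,ω) for P-a.e. ω. Define, on X̃ = (ℝ/τ₁ℤ) × (ℝ/τ₂ℤ) × ℝ^d, the map Φ̃(t,ω)(s₁,s₂,x) := (t+s₁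 mod τ₁, t+s₂ mod τ₂, K^{s₁,s₂}(t,0,x,ω)) for t ≥ 0. Then Φ̃ is a crude cocycle over θ: for every fixed t, s ≥ 0 and every (s₁,s₂,x) ∈ X̃, Φ̃(t,θ_s ω)(Φ̃(s,ω)(s₁,s₂,x)) = Φ̃(t+s,ω)(s₁,s₂,x) for P-a.e. ω. -/
open MeasureTheory

/-- **Crude cocycle assertion of Lemma 3.8.** -/
theorem lifted_flow_is_crude_cocycle {d : ℕ}
    {Ω : Type*} [MeasurableSpace Ω] (P : Measure Ω) [IsProbabilityMeasure P]
    (θ : ℝ → Ω → Ω)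
    (hθ_group : ∀ t s : ℝ, θ (t + s) = θ t ∘ θ s) (hθ_zero : θ 0 = id)
    (hθ_mp : ∀ t : ℝ, MeasurePreserving (θ t) P P)
    (τ₁ τ₂ : ℝ) (hτ₁ : 0 < τ₁) (hτ₂ : 0 < τ₂)
    (K : ℝ → ℝ → ℝ → ℝ → EuclideanSpace ℝ (Fin d) → Ω → EuclideanSpace ℝ (Fin d))
    (hK_meas : Measurable
      fun z : ℝ × ℝ × ℝ × ℝ × EuclideanSpace ℝ (Fin d) × Ω =>
        K z.1 z.2.1 z.2.2.1 z.2.2.2.1 z.2.2.2.2.1 z.2.2.2.2.2)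
    -- (i) periodicity in the parameters r₁, r₂
    (hper : ∀ r₁ r₂ t s : ℝ, s ≤ t → ∀ x : EuclideanSpace ℝ (Fin d),
      (∀ᵐ ω ∂P, K (r₁ + τ₁) r₂ t s x ω = K r₁ r₂ t s x ω) ∧
      (∀ᵐ ω ∂P, K r₁ (r₂ + τ₂) t s x ω = K r₁ r₂ t s x ω))
    -- (ii) flow property
    (hflow : ∀ r₁ r₂ s r t : ℝ, s ≤ r → r ≤ t → ∀ x : EuclideanSpace ℝ (Fin d),
      ∀ᵐ ω ∂P, K r₁ r₂ t r (K r₁ r₂ r s x ω) ω = K r₁ r₂ t s x ω)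
    -- (iii) shift property
    (hshift : ∀ r₁ r₂ r t s : ℝ, s ≤ t → ∀ x : EuclideanSpace ℝ (Fin d),
      ∀ᵐ ω ∂P, K r₁ r₂ (t + r) (s + r) x (θ (-r) ω) = K (r₁ + r) (r₂ + r) t s x ω) :
    -- crude cocycle property of the lifted map Φ̃ on the cylinder
    ∀ t s : ℝ, 0 ≤ t → 0 ≤ s → ∀ s₁ s₂ : ℝ, ∀ x : EuclideanSpace ℝ (Fin d),
      ∀ᵐ ω ∂P,
        ((((t + (s + s₁) : ℝ) : AddCircle τ₁),
          ((t + (s + s₂) : ℝ) : AddCircle τ₂),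
          K (s + s₁) (s + s₂) t 0 (K s₁ s₂ s 0 x ω) (θ s ω)) :
            AddCircle τ₁ × AddCircle τ₂ × EuclideanSpace ℝ (Fin d)) =
        ((((t + s) + s₁ : ℝ) : AddCircle τ₁),
          (((t + s) + s₂ : ℝ) : AddCircle τ₂),
          K s₁ s₂ (t + s) 0 x ω) := by
  intro t s ht hs s₁ s₂ x
  have hθinv : ∀ ω : Ω, θ (-s) (θ s ω) = ω := by
    intro ω
    have h1 : θ (-s + s) = θ (-s) ∘ θ s := hθ_group (-s) s
    have h2 : (-s : ℝ) + s = 0 := by ring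
    rw [h2, hθ_zero] at h1
    exact (congrFun h1.symm ω : _)
  have hqmp : MeasureTheory.Measure.QuasiMeasurePreserving (θ s) P P :=
    (hθ_mp s).quasiMeasurePreserving
  -- Step A : inner value via θ s ω
  have hA0 := hshift s₁ s₂ s 0 (-s) (by linarith) x
  have hA : ∀ᵐ ω ∂P, K s₁ s₂ s 0 x ω = K (s₁ + s) (s₂ + s) 0 (-s) x (θ s ω) := by
    filter_upwards [hqmp.ae hA0] with ω h
    have h' : K s₁ s₂ (0 + s) (-s + s) x (θ (-s) (θ s ω))
        = K (s₁ + s) (s₂ + s) 0 (-s) x (θ s ω) := h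
    rw [hθinv ω] at h'
    simp only [zero_add, neg_add_cancel, add_zero] at h'
    exact h'
  -- Step B : flow property at shifted parameters, pulled back along θ s
  have hB0 := hflow (s₁ + s) (s₂ + s) (-s) 0 t (by linarith) ht x
  have hB : ∀ᵐ ω ∂P,
      K (s₁ + s) (s₂ + s) t 0 (K (s₁ + s) (s₂ + s) 0 (-s) x (θ s ω)) (θ s ω)
        = K (s₁ + s) (s₂ + s) t (-s) x (θ s ω) := hqmp.ae hB0
  -- Step C : shift property relating t + s to t, pulled back along θ s
  have hC0 := hshift s₁ s₂ s t (-s) (by linarith) x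
  have hC : ∀ᵐ ω ∂P,
      K (s₁ + s) (s₂ + s) t (-s) x (θ s ω) = K s₁ s₂ (t + s) 0 x ω := by
    filter_upwards [hqmp.ae hC0] with ω h
    have h' : K s₁ s₂ (t + s) (-s + s) x (θ (-s) (θ s ω))
        = K (s₁ + s) (s₂ + s) t (-s) x (θ s ω) := h
    rw [hθinv ω] at h'
    simp only [zero_add, neg_add_cancel, add_zero] at h'
    exact h'.symm
  filter_upwards [hA, hB, hC] with ω hA hB hC
  have hx : K (s + s₁) (s + s₂) t 0 (K s₁ s₂ s 0 x ω) (θ s ω)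
      = K s₁ s₂ (t + s) 0 x ω := by
    rw [hA]
    rw [show s + s₁ = s₁ + s by ring, show s + s₂ = s₂ + s by ring]
    rw [hB, hC]
  refine Prod.ext ?_ (Prod.ext ?_ hx)
  · norm_num [show t + (s + s₁) = t + s + s₁ by ring]
  · norm_num [show t + (s + s₂) = t + s + s₂ by ring]
end
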